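/- Assume that for every skew-symmetrizable initial matrix the sign-coherence property holds (every C-matrix of every pattern is column sign-coherent). If for some vertex t and index i the g-vector g_{i;t} has all entries ≥ 0 (equivalently, the ray ℝ_{≥0} g_{i;t} meets the nonnegative orthant in more than the origin), then g_{i;t} equals a standard basis vector e_ℓ for some ℓ ∈ {1,…,n}. -/

import Mathlib

open Matrix

namespace ClusterPattern

variable {ι : Type*} [Fintype ι] [DecidableEq ι]

/-- Entrywise positive part `[A]₊`. -/
def posPart (A : Matrix ι ι ℤ) : Matrix ι ι ℤ := Matrix.of fun i j => max (A i j) 0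

/-- `A^{•k}`: all columns other than the `k`-th set to `0`. -/
def colSel (k : ι) (A : Matrix ι ι ℤ) : Matrix ι ι ℤ :=
  Matrix.of fun i j => if j = k then A i j else 0

/-- `A^{k•}`: all rows other than the `k`-th set to `0`. -/
def rowSel (k : ι) (A : Matrix ι ι ℤ) : Matrix ι ι ℤ :=
  Matrix.of fun i j => if i = k then A i j else 0

/-- `J_k`: identity with `k`-th diagonal entry replaced by `-1`. -/
def Jmat (k : ι) : Matrix ι ι ℤ := Matrix.diagonal fun i => if i = k then -1 else 1

/-- A skew-symmetrizable integer matrix. -/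
def IsSkewSymmetrizable (B : Matrix ι ι ℤ) : Prop :=
  ∃ D : ι → ℚ, (∀ i, 0 < D i) ∧ ∀ i j, D i * (B i j : ℚ) = -(D j * (B j i : ℚ))

/-- Matrix mutation `μ_k`. -/
def mutate (k : ι) (B : Matrix ι ι ℤ) : Matrix ι ι ℤ :=
  Matrix.of fun i j => if i = k ∨ j = k then -B i j
    else B i j + B i k * max (B k j) 0 + max (-B i k) 0 * B k j

/-- The exchange matrix `B_t` at the vertex reached from `B0` along the path `w`. -/
def Bmat (B0 : Matrix ι ι ℤ) (w : List ι) : Matrix ι ι ℤ :=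
  w.foldl (fun B k => mutate k B) B0

/-- One mutation step of a `C`-matrix. -/
def Cstep (B C : Matrix ι ι ℤ) (k : ι) : Matrix ι ι ℤ :=
  C * Jmat k + C * rowSel k (posPart B) + colSel k (posPart (-C)) * B

/-- One mutation step of a `G`-matrix. -/
def Gstep (B0 B C G : Matrix ι ι ℤ) (k : ι) : Matrix ι ι ℤ :=
  G * Jmat k + G * colSel k (posPart (-B)) - B0 * colSel k (posPart (-C))

/-- The `C`-matrix `C_t` at the vertex reached from the initial matrix `B0` along `w`. -/
def Cmat (B0 : Matrix ι ι ℤ) (w : List ι) : Matrix ι ι ℤ :=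
  (w.foldl (fun p k => (mutate k p.1, Cstep p.1 p.2 k))
    ((B0, 1) : Matrix ι ι ℤ × Matrix ι ι ℤ)).2

/-- The `G`-matrix `G_t` at the vertex reached from the initial matrix `B0` along `w`. -/
def Gmat (B0 : Matrix ι ι ℤ) (w : List ι) : Matrix ι ι ℤ :=
  (w.foldl (fun p k => (mutate k p.1, Cstep p.1 p.2.1 k, Gstep B0 p.1 p.2.1 p.2.2 k))
    ((B0, 1, 1) : Matrix ι ι ℤ × Matrix ι ι ℤ × Matrix ι ι ℤ)).2.2

/-- A nonzero integer vector with all entries nonnegative. -/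
def IsPositiveVec (v : ι → ℤ) : Prop := v ≠ 0 ∧ ∀ i, 0 ≤ v i

/-- A nonzero integer vector with all entries nonpositive. -/
def IsNegativeVec (v : ι → ℤ) : Prop := v ≠ 0 ∧ ∀ i, v i ≤ 0

/-- Every column is a positive or a negative vector. -/
def ColSignCoherent (M : Matrix ι ι ℤ) : Prop :=
  ∀ j, IsPositiveVec (fun i => M i j) ∨ IsNegativeVec (fun i => M i j)

/-- Every row is a positive or a negative vector. -/
def RowSignCoherent (M : Matrix ι ι ℤ) : Prop :=
  ∀ i, IsPositiveVec (fun j => M i j) ∨ IsNegativeVec (fun j => M i j)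

/-!
Sign-coherence linearises the mutation of `C`- and `G`-matrices: if `ε = ±1` is the sign of the
`k`-th column of `C_t`, then `C_{t'} = C_t E` and `G_{t'} = G_t F` with
`E = J_k + [εB_t]₊^{k•}` and `F = J_k + [-εB_t]₊^{•k}`, while `μ_k(B_t) = F B_t E`, `F² = 1` and
`Eᵀ D = D F` for a skew-symmetrizer `D`, which may be taken integral. Along any path this
propagates `B⁰ C_t = G_t B_t` and the duality `C_tᵀ D G_t = D`, so `G_t` is unimodular with
`D G_t⁻¹ = C_tᵀ D`.

Now let `g = g_{i;t} ≥ 0`. For `a ≠ i` the `(a, i)` entry of the duality is a sum of terms of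
one sign, by sign-coherence of the `a`-th column of `C_t`; hence every row `ℓ` of `C_t` with
`g_ℓ ≠ 0` vanishes off column `i`, and column `ℓ` of `G_t⁻¹` is a multiple `h e_i`. Then
`G_t G_t⁻¹ = 1` reads `h g = e_ℓ`, which over `ℤ` with `g ≥ 0` forces `g = e_ℓ`.
-/

def Emat (k : ι) (ε : ℤ) (B : Matrix ι ι ℤ) : Matrix ι ι ℤ :=
  Jmat k + rowSel k (posPart (ε • B))

def Fmat (k : ι) (ε : ℤ) (B : Matrix ι ι ℤ) : Matrix ι ι ℤ :=
  Jmat k + colSel k (posPart (-(ε • B)))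

omit [Fintype ι] in
lemma Jmat_apply (k i j : ι) :
    Jmat k i j = if i = j then (if i = k then -1 else 1) else 0 := by
  simp [Jmat, Matrix.diagonal_apply]

omit [Fintype ι] in
lemma Emat_apply (k : ι) (ε : ℤ) (B : Matrix ι ι ℤ) (i j : ι) :
    Emat k ε B i j = (if i = j then (if i = k then -1 else 1) else 0) +
      if i = k then max (ε * B k j) 0 else 0 := by
  simp only [Emat, Matrix.add_apply, Jmat_apply, rowSel, posPart, Matrix.of_apply,
    Matrix.smul_apply, smul_eq_mul]
  split_ifs <;> simp_all

omit [Fintype ι] in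
lemma Fmat_apply (k : ι) (ε : ℤ) (B : Matrix ι ι ℤ) (i j : ι) :
    Fmat k ε B i j = (if i = j then (if i = k then -1 else 1) else 0) +
      if j = k then max (-(ε * B i k)) 0 else 0 := by
  simp only [Fmat, Matrix.add_apply, Jmat_apply, colSel, posPart, Matrix.of_apply,
    Matrix.neg_apply, Matrix.smul_apply, smul_eq_mul]
  split_ifs <;> simp_all

lemma Fmat_mul_self {k : ι} {B : Matrix ι ι ℤ} (hB : B k k = 0) (ε : ℤ) :
    Fmat k ε B * Fmat k ε B = 1 := by
  ext i j
  simp only [Matrix.mul_apply, Fmat_apply, add_mul, mul_add, Finset.sum_add_distrib, ite_mul,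
    mul_ite, zero_mul, mul_zero]
  simp only [mul_neg, mul_one, neg_neg, Finset.sum_ite_eq', Finset.mem_univ, ↓reduceIte, neg_mul,
    one_mul, Finset.sum_ite_irrel, Finset.sum_const_zero, Matrix.one_apply]
  split_ifs <;> simp_all

lemma mutate_eq_Fmat_mul_mul_Emat {k : ι} {B : Matrix ι ι ℤ} (hB : B k k = 0) {ε : ℤ}
    (hε : ε = 1 ∨ ε = -1) : mutate k B = Fmat k ε B * B * Emat k ε B := by
  ext i j
  simp only [Matrix.mul_apply, Fmat_apply, Emat_apply, add_mul, mul_add, Finset.sum_add_distrib,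
    ite_mul, mul_ite, zero_mul, mul_zero, Finset.sum_mul]
  simp only [mutate, of_apply, neg_mul, one_mul, mul_neg, mul_one, neg_neg, Finset.sum_ite_eq,
    Finset.sum_ite_eq', Finset.mem_univ, ↓reduceIte]
  have hmax : ∀ x : ℤ, max (-x) 0 = max x 0 - x := fun x => by omega
  rcases hε with rfl | rfl <;> split_ifs <;> subst_vars <;> simp_all <;> ring

lemma Emat_transpose_mul_diagonal {d : ι → ℤ} (hd : ∀ i, 0 ≤ d i) {B : Matrix ι ι ℤ}
    (hskew : (diagonal d * B)ᵀ = -(diagonal d * B)) (k : ι) (ε : ℤ) :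
    (Emat k ε B)ᵀ * diagonal d = diagonal d * Fmat k ε B := by
  ext a b
  have hswap : d k * max (ε * B k a) 0 = d a * max (-(ε * B a k)) 0 := by
    have hak := congrFun (congrFun hskew a) k
    simp only [Matrix.transpose_apply, Matrix.neg_apply, Matrix.diagonal_mul] at hak
    rw [mul_max_of_nonneg _ _ (hd k), mul_max_of_nonneg _ _ (hd a), mul_zero, mul_zero]
    congr 1
    linear_combination ε * hak
  simp only [Matrix.mul_diagonal, Matrix.diagonal_mul, Matrix.transpose_apply, Emat_apply,
    Fmat_apply]
  rw [add_mul, mul_add]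
  congr 1
  · by_cases hab : a = b
    · subst hab; ring
    · simp [hab, Ne.symm hab]
  · split_ifs with hbk
    · subst hbk; linear_combination hswap
    · simp

omit [Fintype ι] [DecidableEq ι] in
lemma ColSignCoherent.exists_sign {C : Matrix ι ι ℤ} (hC : ColSignCoherent C) (k : ι) :
    ∃ ε : ℤ, (ε = 1 ∨ ε = -1) ∧ ∀ i, 0 ≤ ε * C i k := by
  rcases hC k with ⟨-, hpos⟩ | ⟨-, hneg⟩
  · exact ⟨1, .inl rfl, fun i => by simpa using hpos i⟩
  · exact ⟨-1, .inr rfl, fun i => by simpa using hneg i⟩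

lemma Cstep_eq_mul_Emat {B C : Matrix ι ι ℤ} {k : ι} {ε : ℤ} (hε : ε = 1 ∨ ε = -1)
    (hC : ∀ i, 0 ≤ ε * C i k) : Cstep B C k = C * Emat k ε B := by
  ext i j
  simp only [Cstep, Emat, mul_add, Matrix.add_apply, Matrix.mul_apply, rowSel, colSel, posPart,
    Matrix.of_apply]
  simp only [mul_ite, mul_zero, ite_mul, zero_mul, Finset.sum_ite_eq', Finset.mem_univ, ↓reduceIte,
    Matrix.neg_apply, Matrix.smul_apply, smul_eq_mul, Finset.sum_add_distrib]
  rcases hε with rfl | rfl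
  · have h0 : max (-C i k) 0 = 0 := max_eq_right (by linarith [hC i])
    simp [h0]
  · have h0 : max (-C i k) 0 = -C i k := max_eq_left (by linarith [hC i])
    have hmax : max (-B k j) 0 = max (B k j) 0 - B k j := by omega
    rw [h0, neg_one_mul, hmax]
    ring

lemma Gstep_eq_mul_Fmat {B0 B C G : Matrix ι ι ℤ} {k : ι} {ε : ℤ} (hε : ε = 1 ∨ ε = -1)
    (hC : ∀ i, 0 ≤ ε * C i k) (hBCG : B0 * C = G * B) :
    Gstep B0 B C G k = G * Fmat k ε B := by
  ext i j
  have hcol := congrFun (congrFun hBCG i) k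
  simp only [Matrix.mul_apply] at hcol
  simp only [Gstep, Fmat, mul_add, Matrix.add_apply, Matrix.sub_apply, Matrix.mul_apply, colSel,
    posPart, Matrix.of_apply, Matrix.neg_apply, Matrix.smul_apply, smul_eq_mul, mul_ite, mul_zero]
  rw [Finset.sum_add_distrib]
  split_ifs with hjk
  · subst hjk
    rcases hε with rfl | rfl
    · have h0 : ∀ x, max (-C x j) 0 = 0 := fun x => max_eq_right (by linarith [hC x])
      simp [h0]
    · have h0 : ∀ x, max (-C x j) 0 = -C x j := fun x => max_eq_left (by linarith [hC x])
      have h1 : ∀ x, max (-(-1 * B x j)) 0 = max (-B x j) 0 + B x j := fun x => by omega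
      simp only [h0, h1, mul_add, mul_neg, Finset.sum_add_distrib, Finset.sum_neg_distrib, hcol]
      ring
  · simp

structure DualityRelations (d : ι → ℤ) (B0 B C G : Matrix ι ι ℤ) : Prop where
  skew : (diagonal d * B)ᵀ = -(diagonal d * B)
  mul_C : B0 * C = G * B
  dual : Cᵀ * diagonal d * G = diagonal d

lemma diag_eq_zero_of_skew {d : ι → ℤ} (hd : ∀ i, 0 < d i) {B : Matrix ι ι ℤ}
    (hskew : (diagonal d * B)ᵀ = -(diagonal d * B)) (k : ι) : B k k = 0 := by
  have hkk := congrFun (congrFun hskew k) k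
  simp only [Matrix.transpose_apply, Matrix.neg_apply, Matrix.diagonal_mul] at hkk
  have hdB : d k * B k k = 0 := by linarith
  exact (mul_eq_zero.mp hdB).resolve_left (hd k).ne'

lemma DualityRelations.mutate_step {d : ι → ℤ} (hd : ∀ i, 0 < d i) {B0 B C G : Matrix ι ι ℤ}
    (h : DualityRelations d B0 B C G) {k : ι} {ε : ℤ} (hε : ε = 1 ∨ ε = -1)
    (hC : ∀ i, 0 ≤ ε * C i k) :
    DualityRelations d B0 (mutate k B) (Cstep B C k) (Gstep B0 B C G k) := by
  have hBkk := diag_eq_zero_of_skew hd h.skew k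
  have hFF := Fmat_mul_self hBkk ε
  have hED := Emat_transpose_mul_diagonal (fun i => (hd i).le) h.skew k ε
  rw [Cstep_eq_mul_Emat hε hC, Gstep_eq_mul_Fmat hε hC h.mul_C,
    mutate_eq_Fmat_mul_mul_Emat hBkk hε]
  set E := Emat k ε B
  set F := Fmat k ε B
  constructor
  · have hΔ : diagonal d * (F * B * E) = Eᵀ * (diagonal d * B) * E := by
      rw [← Matrix.mul_assoc, ← Matrix.mul_assoc, ← hED, Matrix.mul_assoc _ (diagonal d) B]
    rw [hΔ, Matrix.transpose_mul, Matrix.transpose_mul, h.skew, Matrix.transpose_transpose]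
    simp only [Matrix.mul_neg, Matrix.neg_mul, Matrix.mul_assoc]
  · calc B0 * (C * E) = G * (F * F) * B * E := by
          rw [← Matrix.mul_assoc, h.mul_C, hFF, Matrix.mul_one]
      _ = G * F * (F * B * E) := by simp only [Matrix.mul_assoc]
  · calc (C * E)ᵀ * diagonal d * (G * F) = Eᵀ * (Cᵀ * diagonal d * G) * F := by
          simp only [Matrix.transpose_mul, Matrix.mul_assoc]
      _ = diagonal d := by rw [h.dual, hED, Matrix.mul_assoc, hFF, Matrix.mul_one]

omit [Fintype ι] in
lemma Bmat_append_singleton (B0 : Matrix ι ι ℤ) (w : List ι) (k : ι) :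
    Bmat B0 (w ++ [k]) = mutate k (Bmat B0 w) := by
  simp [Bmat]

lemma foldl_mutate_Cstep_fst (w : List ι) (B C : Matrix ι ι ℤ) :
    (w.foldl (fun p k => (mutate k p.1, Cstep p.1 p.2 k)) (B, C)).1 = Bmat B w := by
  induction w generalizing B C with
  | nil => rfl
  | cons k w ih => simpa [Bmat] using ih (mutate k B) (Cstep B C k)

lemma Cmat_append_singleton (B0 : Matrix ι ι ℤ) (w : List ι) (k : ι) :
    Cmat B0 (w ++ [k]) = Cstep (Bmat B0 w) (Cmat B0 w) k := by
  simp only [Cmat, List.foldl_append, List.foldl_cons, List.foldl_nil]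
  rw [foldl_mutate_Cstep_fst]

lemma foldl_mutate_Cstep_Gstep_fst (B0 : Matrix ι ι ℤ) (w : List ι) (B C G : Matrix ι ι ℤ) :
    (w.foldl (fun p k => (mutate k p.1, Cstep p.1 p.2.1 k, Gstep B0 p.1 p.2.1 p.2.2 k))
      (B, C, G)).1 = Bmat B w := by
  induction w generalizing B C G with
  | nil => rfl
  | cons k w ih => simpa [Bmat] using ih (mutate k B) (Cstep B C k) (Gstep B0 B C G k)

lemma foldl_mutate_Cstep_Gstep_snd (B0 : Matrix ι ι ℤ) (w : List ι) (B C G : Matrix ι ι ℤ) :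
    (w.foldl (fun p k => (mutate k p.1, Cstep p.1 p.2.1 k, Gstep B0 p.1 p.2.1 p.2.2 k))
      (B, C, G)).2.1 = (w.foldl (fun p k => (mutate k p.1, Cstep p.1 p.2 k)) (B, C)).2 := by
  induction w generalizing B C G with
  | nil => rfl
  | cons k w ih => simpa using ih (mutate k B) (Cstep B C k) (Gstep B0 B C G k)

lemma Gmat_append_singleton (B0 : Matrix ι ι ℤ) (w : List ι) (k : ι) :
    Gmat B0 (w ++ [k]) = Gstep B0 (Bmat B0 w) (Cmat B0 w) (Gmat B0 w) k := by
  simp only [Gmat, List.foldl_append, List.foldl_cons, List.foldl_nil]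
  rw [foldl_mutate_Cstep_Gstep_fst, foldl_mutate_Cstep_Gstep_snd]
  rfl

lemma dualityRelations_of_colSignCoherent {d : ι → ℤ} (hd : ∀ i, 0 < d i)
    {B0 : Matrix ι ι ℤ} (hskew : (diagonal d * B0)ᵀ = -(diagonal d * B0))
    (hsc : ∀ w, ColSignCoherent (Cmat B0 w)) (w : List ι) :
    DualityRelations d B0 (Bmat B0 w) (Cmat B0 w) (Gmat B0 w) := by
  induction w using List.reverseRecOn with
  | nil => exact ⟨hskew, by simp [Cmat, Gmat, Bmat], by simp [Cmat, Gmat]⟩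
  | append_singleton w k ih =>
    obtain ⟨ε, hε, hC⟩ := (hsc w).exists_sign k
    rw [Bmat_append_singleton, Cmat_append_singleton, Gmat_append_singleton]
    exact ih.mutate_step hd hε hC

lemma IsSkewSymmetrizable.exists_int {B : Matrix ι ι ℤ} (hB : IsSkewSymmetrizable B) :
    ∃ d : ι → ℤ, (∀ i, 0 < d i) ∧ (diagonal d * B)ᵀ = -(diagonal d * B) := by
  obtain ⟨D, hD, hskew⟩ := hB
  set N : ℚ := ∏ j, ((D j).den : ℚ)
  let d : ι → ℤ := fun i => (D i).num * ∏ j ∈ Finset.univ.erase i, ((D j).den : ℤ)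
  have hd : ∀ i, (d i : ℚ) = N * D i := fun i => by
    simp only [d, N, Int.cast_mul, Int.cast_prod, Int.cast_natCast]
    rw [← Rat.mul_den_eq_num, mul_assoc,
      Finset.mul_prod_erase _ (fun j => ((D j).den : ℚ)) (Finset.mem_univ i), mul_comm]
  refine ⟨d, fun i => mul_pos (Rat.num_pos.mpr (hD i)) (Finset.prod_pos fun j _ => ?_), ?_⟩
  · exact_mod_cast (D j).den_pos
  · ext i j
    simp only [Matrix.transpose_apply, Matrix.neg_apply, Matrix.diagonal_mul]
    have hq : ((d j * B j i : ℤ) : ℚ) = ((-(d i * B i j) : ℤ) : ℚ) := by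
      push_cast
      rw [hd, hd]
      linear_combination N * hskew j i
    exact_mod_cast hq

lemma isUnit_det_of_dual {d : ι → ℤ} (hd : ∀ i, d i ≠ 0) {C G : Matrix ι ι ℤ}
    (hdual : Cᵀ * diagonal d * G = diagonal d) : IsUnit G.det := by
  have hdet := congrArg Matrix.det hdual
  rw [Matrix.det_mul, Matrix.det_mul, Matrix.det_transpose, mul_right_comm] at hdet
  have hΔ : (diagonal d).det ≠ 0 := by
    rw [Matrix.det_diagonal]
    exact Finset.prod_ne_zero_iff.mpr fun i _ => hd i
  refine IsUnit.of_mul_eq_one_right C.det (mul_right_cancel₀ hΔ ?_)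
  rw [hdet, one_mul]

lemma eq_zero_of_dual_of_col_nonneg {d : ι → ℤ} (hd : ∀ i, 0 < d i) {C G : Matrix ι ι ℤ}
    (hC : ColSignCoherent C) (hdual : Cᵀ * diagonal d * G = diagonal d) {i : ι}
    (hpos : ∀ j, 0 ≤ G j i) {ℓ : ι} (hℓ : G ℓ i ≠ 0) {a : ι} (ha : a ≠ i) : C ℓ a = 0 := by
  obtain ⟨ε, hε, hCa⟩ := hC.exists_sign a
  have hsum : ∑ l, ε * C l a * d l * G l i = 0 := by
    have hai := congrFun (congrFun hdual a) i
    rw [Matrix.mul_apply, Matrix.diagonal_apply_ne _ ha] at hai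
    simp only [Matrix.mul_diagonal, Matrix.transpose_apply, mul_assoc] at hai ⊢
    rw [← Finset.mul_sum, hai, mul_zero]
  have hterm := (Finset.sum_eq_zero_iff_of_nonneg fun l _ =>
    mul_nonneg (mul_nonneg (hCa l) (hd l).le) (hpos l)).mp hsum ℓ (Finset.mem_univ ℓ)
  rcases hε with rfl | rfl <;> simpa [(hd ℓ).ne', hℓ] using hterm

lemma col_eq_single_of_dual {d : ι → ℤ} (hd : ∀ i, 0 < d i) {C G : Matrix ι ι ℤ}
    (hC : ColSignCoherent C) (hdual : Cᵀ * diagonal d * G = diagonal d) {i : ι}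
    (hpos : ∀ j, 0 ≤ G j i) : ∃ ℓ, ∀ j, G j i = if j = ℓ then 1 else 0 := by
  have hG := isUnit_det_of_dual (fun i => (hd i).ne') hdual
  set H := G⁻¹
  have hGH : G * H = 1 := Matrix.mul_nonsing_inv G hG
  have hCH : Cᵀ * diagonal d = diagonal d * H :=
    calc Cᵀ * diagonal d = Cᵀ * diagonal d * (G * H) := by rw [hGH, Matrix.mul_one]
      _ = diagonal d * H := by rw [← Matrix.mul_assoc, hdual]
  have hHcol : ∀ ℓ, G ℓ i ≠ 0 → ∀ a ≠ i, H a ℓ = 0 := by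
    intro ℓ hℓ a ha
    have haℓ := congrFun (congrFun hCH a) ℓ
    simp only [Matrix.mul_diagonal, Matrix.diagonal_mul, Matrix.transpose_apply,
      eq_zero_of_dual_of_col_nonneg hd hC hdual hpos hℓ ha, zero_mul] at haℓ
    exact (mul_eq_zero.mp haℓ.symm).resolve_left (hd a).ne'
  obtain ⟨ℓ, hℓ⟩ : ∃ ℓ, G ℓ i ≠ 0 := by
    by_contra! h
    simpa [Matrix.mul_apply, h] using congrFun (congrFun (Matrix.nonsing_inv_mul G hG) i) i
  have hprod : ∀ j, G j i * H i ℓ = if j = ℓ then 1 else 0 := by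
    intro j
    rw [← Matrix.one_apply, ← hGH, Matrix.mul_apply,
      Finset.sum_eq_single i (fun a _ ha => by rw [hHcol ℓ hℓ a ha, mul_zero]) (by simp)]
  have hone : G ℓ i = 1 := Int.eq_one_of_mul_eq_one_right (hpos ℓ) (by simpa using hprod ℓ)
  have hHiℓ : H i ℓ = 1 := by simpa [hone] using hprod ℓ
  exact ⟨ℓ, fun j => by simpa [hHiℓ] using hprod j⟩

theorem gvector_nonneg_eq_std_basis_general (n : ℕ)
    (hsc : ∀ B : Matrix (Fin n) (Fin n) ℤ, IsSkewSymmetrizable B →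
      ∀ w : List (Fin n), ColSignCoherent (Cmat B w))
    (B0 : Matrix (Fin n) (Fin n) ℤ) (hB0 : IsSkewSymmetrizable B0)
    (w : List (Fin n)) (i : Fin n)
    (hpos : ∀ j, 0 ≤ Gmat B0 w j i) :
    ∃ ℓ : Fin n, ∀ j, Gmat B0 w j i = if j = ℓ then 1 else 0 := by
  obtain ⟨d, hd, hskew⟩ := hB0.exists_int
  exact col_eq_single_of_dual hd (hsc B0 hB0 w)
    (dualityRelations_of_colSignCoherent hd hskew (hsc B0 hB0) w).dual hpos

/-- A `g`-vector with all entries nonnegative is a standard basis vector. -/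
theorem gvector_nonneg_eq_std_basis (n : ℕ) (hn : 1 ≤ n)
    (hsc : ∀ B : Matrix (Fin n) (Fin n) ℤ, IsSkewSymmetrizable B →
      ∀ w : List (Fin n), ColSignCoherent (Cmat B w))
    (B0 : Matrix (Fin n) (Fin n) ℤ) (hB0 : IsSkewSymmetrizable B0)
    (w : List (Fin n)) (i : Fin n)
    (hpos : ∀ j, 0 ≤ Gmat B0 w j i) :
    ∃ ℓ : Fin n, ∀ j, Gmat B0 w j i = if j = ℓ then 1 else 0 :=
  gvector_nonneg_eq_std_basis_general n hsc B0 hB0 w i hpos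

end ClusterPattern
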